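/- arXiv:2004.03440 — 3 statements merged into one kernel-verified Lean document; each statement's English description precedes it below -/
import Mathlib

section
/- Let d ≥ 1, let μ be any real number, and let θ be a smooth, strictly positive, ℤ^d-periodic function on ℝ^d. Then (μ^2/3) ∫_{𝕋^d} θ^{μ-1} |∇θ|^4 dx ≤ ∫_{𝕋^d} θ^{μ+1} (Δθ)^2 dx + 2 ∫_{𝕋^d} θ^{μ+1} |∇∇θ|^2 dx. -/
open MeasureTheory Real

/-- Partial derivative `∂ᵢ f` of a function on `ℝᵈ` (as `EuclideanSpace`). -/
noncomputable def pder {d : ℕ} (i : Fin d) (f : EuclideanSpace ℝ (Fin d) → ℝ)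
    (x : EuclideanSpace ℝ (Fin d)) : ℝ :=
  fderiv ℝ f x (EuclideanSpace.single i 1)

/-- The Laplacian `Δ f = ∑ᵢ ∂ᵢ∂ᵢ f`. -/
noncomputable def lap {d : ℕ} (f : EuclideanSpace ℝ (Fin d) → ℝ)
    (x : EuclideanSpace ℝ (Fin d)) : ℝ :=
  ∑ i, pder i (pder i f) x

/-- Squared norm of the gradient, `|∇f|² = ∑ᵢ (∂ᵢ f)²`. -/
noncomputable def gradSq {d : ℕ} (f : EuclideanSpace ℝ (Fin d) → ℝ)
    (x : EuclideanSpace ℝ (Fin d)) : ℝ :=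
  ∑ i, (pder i f x) ^ 2

/-- Squared Frobenius norm of the Hessian, `|∇∇f|² = ∑ᵢⱼ (∂ᵢ∂ⱼ f)²`. -/
noncomputable def hessSq {d : ℕ} (f : EuclideanSpace ℝ (Fin d) → ℝ)
    (x : EuclideanSpace ℝ (Fin d)) : ℝ :=
  ∑ i, ∑ j, (pder i (pder j f) x) ^ 2

/-- The fundamental domain `[0,1)^d` of the torus `𝕋^d`. -/
def fundDom (d : ℕ) : Set (EuclideanSpace ℝ (Fin d)) :=
  {x | ∀ i, 0 ≤ x i ∧ x i < 1}

/-- `ℤ^d`-periodicity of a function on `ℝ^d`. -/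
def ZPeriodic {d : ℕ} (f : EuclideanSpace ℝ (Fin d) → ℝ) : Prop :=
  ∀ (x : EuclideanSpace ℝ (Fin d)) (k : Fin d → ℤ),
    f (x + (WithLp.equiv 2 (Fin d → ℝ)).symm (fun i => (k i : ℝ))) = f x

/-!
Write `G = |∇θ|²`, `Q = ∇θ · (∇∇θ) ∇θ`. The vector field `θ^μ G ∇θ` has divergence
`μ θ^(μ-1) G² + θ^μ (G Δθ + 2 Q)`, and the integral of a derivative of a smooth periodic function
over the unit cell vanishes (divergence theorem on the unit box, whose opposite faces cancel).
Hence `∫ θ^μ (G Δθ + 2 Q) = -μ ∫ θ^(μ-1) G²`. Multiplying by `-μ` and bounding the integrand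
pointwise by Young's inequality, together with `Q² ≤ G² |∇∇θ|²` (Cauchy–Schwarz), gives
`μ² A ≤ μ²/2 A + 3/2 ∫ θ^(μ+1) (Δθ)² + 3 ∫ θ^(μ+1) |∇∇θ|²` for `A = ∫ θ^(μ-1) G²`.
-/

/-- `∇f · (∇∇f) ∇f`. -/
noncomputable def gradHessGrad {d : ℕ} (f : EuclideanSpace ℝ (Fin d) → ℝ)
    (x : EuclideanSpace ℝ (Fin d)) : ℝ :=
  ∑ i, ∑ j, pder i f x * pder j f x * pder i (pder j f) x

section Calculus

variable {d : ℕ} {f g : EuclideanSpace ℝ (Fin d) → ℝ} {x : EuclideanSpace ℝ (Fin d)}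
  {m n : WithTop ℕ∞}

theorem contDiff_pder (hf : ContDiff ℝ n f) (hmn : m + 1 ≤ n) (i : Fin d) :
    ContDiff ℝ m (pder i f) :=
  (hf.fderiv_right hmn).clm_apply contDiff_const

theorem contDiff_pder_pder (hf : ContDiff ℝ n f) (hmn : m + 2 ≤ n) (i j : Fin d) :
    ContDiff ℝ m (pder i (pder j f)) :=
  contDiff_pder (contDiff_pder (m := m + 1) hf (by rwa [add_assoc, one_add_one_eq_two]) j)
    le_rfl i

theorem contDiff_gradSq (hf : ContDiff ℝ n f) (hmn : m + 1 ≤ n) : ContDiff ℝ m (gradSq f) :=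
  ContDiff.sum fun i _ => (contDiff_pder hf hmn i).pow 2

theorem contDiff_lap (hf : ContDiff ℝ n f) (hmn : m + 2 ≤ n) : ContDiff ℝ m (lap f) :=
  ContDiff.sum fun i _ => contDiff_pder_pder hf hmn i i

theorem contDiff_hessSq (hf : ContDiff ℝ n f) (hmn : m + 2 ≤ n) : ContDiff ℝ m (hessSq f) :=
  ContDiff.sum fun i _ => ContDiff.sum fun j _ => (contDiff_pder_pder hf hmn i j).pow 2

theorem contDiff_gradHessGrad (hf : ContDiff ℝ n f) (hmn : m + 2 ≤ n) :
    ContDiff ℝ m (gradHessGrad f) := by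
  have h1 : m + 1 ≤ n := le_trans (by gcongr; norm_num) hmn
  exact ContDiff.sum fun i _ => ContDiff.sum fun j _ =>
    ((contDiff_pder hf h1 i).mul (contDiff_pder hf h1 j)).mul (contDiff_pder_pder hf hmn i j)

theorem ZPeriodic.pder (hf : ZPeriodic f) (i : Fin d) : ZPeriodic (pder i f) := by
  intro x k
  have hshift : (fun y => f (y + (WithLp.equiv 2 (Fin d → ℝ)).symm (fun i => (k i : ℝ)))) = f :=
    funext fun y => hf y k
  simp only [_root_.pder, ← fderiv_comp_add_right, hshift]

theorem ZPeriodic.gradSq (hf : ZPeriodic f) : ZPeriodic (gradSq f) := fun x k => by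
  simp only [_root_.gradSq, (hf.pder _) x k]

theorem pder_mul (hf : DifferentiableAt ℝ f x) (hg : DifferentiableAt ℝ g x) (i : Fin d) :
    pder i (fun y => f y * g y) x = pder i f x * g x + f x * pder i g x := by
  simp only [pder, fderiv_fun_mul hf hg, add_apply,
    smul_apply, smul_eq_mul]
  ring

theorem pder_rpow_const (hf : DifferentiableAt ℝ f x) (hx : f x ≠ 0) (p : ℝ) (i : Fin d) :
    pder i (fun y => f y ^ p) x = p * f x ^ (p - 1) * pder i f x := by
  simp [pder, (hf.hasFDerivAt.rpow_const (p := p) (Or.inl hx)).fderiv]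

theorem pder_gradSq (hf : ∀ j, DifferentiableAt ℝ (pder j f) x) (i : Fin d) :
    pder i (gradSq f) x = 2 * ∑ j, pder j f x * pder i (pder j f) x := by
  have hG : gradSq f = fun y => ∑ j, pder j f y ^ 2 := rfl
  rw [hG, pder, fderiv_fun_sum (A := fun j y => pder j f y ^ 2) fun j _ => (hf j).pow 2]
  simp only [fderiv_fun_pow 2 (hf _), Nat.add_one_sub_one, pow_one, nsmul_eq_mul,
    Nat.cast_ofNat, sum_apply, smul_apply, smul_eq_mul,
    mul_assoc, Finset.mul_sum]
  rfl

theorem sum_pder_rpow_mul_gradSq_mul_pder (hf : DifferentiableAt ℝ f x)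
    (hf' : ∀ j, DifferentiableAt ℝ (pder j f) x) (hx : f x ≠ 0) (p : ℝ) :
    ∑ i, pder i (fun y => f y ^ p * gradSq f y * pder i f y) x
      = p * (f x ^ (p - 1) * gradSq f x ^ 2)
        + f x ^ p * (gradSq f x * lap f x + 2 * gradHessGrad f x) := by
  have hfp : DifferentiableAt ℝ (fun y => f y ^ p) x := hf.rpow_const (Or.inl hx)
  have hG : DifferentiableAt ℝ (gradSq f) x := DifferentiableAt.fun_sum fun j _ => (hf' j).pow 2
  have hterm : ∀ i, pder i (fun y => f y ^ p * gradSq f y * pder i f y) x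
      = p * f x ^ (p - 1) * gradSq f x * pder i f x ^ 2
        + f x ^ p * gradSq f x * pder i (pder i f) x
        + 2 * f x ^ p * (pder i f x * ∑ j, pder j f x * pder i (pder j f) x) := fun i => by
    rw [pder_mul (f := fun y => f y ^ p * gradSq f y) (hfp.mul hG) (hf' i), pder_mul hfp hG,
      pder_rpow_const hf hx, pder_gradSq hf']
    ring
  rw [Finset.sum_congr rfl fun i _ => hterm i]
  simp only [Finset.sum_add_distrib, ← Finset.mul_sum, mul_assoc, gradSq, lap, gradHessGrad]
  ring

end Calculus

theorem gradHessGrad_sq_le {d : ℕ} (f : EuclideanSpace ℝ (Fin d) → ℝ)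
    (x : EuclideanSpace ℝ (Fin d)) : gradHessGrad f x ^ 2 ≤ gradSq f x ^ 2 * hessSq f x := by
  have h := Finset.sum_mul_sq_le_sq_mul_sq Finset.univ
    (fun p : Fin d × Fin d => pder p.1 f x * pder p.2 f x) (fun p => pder p.1 (pder p.2 f) x)
  simp only [Fintype.sum_prod_type] at h
  calc gradHessGrad f x ^ 2 ≤ (∑ i, ∑ j, (pder i f x * pder j f x) ^ 2) * hessSq f x := h
    _ = gradSq f x ^ 2 * hessSq f x := by
      rw [sq (gradSq f x), gradSq, Finset.sum_mul_sum]
      simp only [mul_pow]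

theorem hessSq_nonneg {d : ℕ} (f : EuclideanSpace ℝ (Fin d) → ℝ) (x : EuclideanSpace ℝ (Fin d)) :
    0 ≤ hessSq f x :=
  Finset.sum_nonneg fun _ _ => Finset.sum_nonneg fun _ _ => sq_nonneg _

theorem neg_mul_mul_add_le {μ s G L Q H : ℝ} (hH : 0 ≤ H) (hQ : Q ^ 2 ≤ G ^ 2 * H) :
    -μ * (s * (G * L + 2 * Q))
      ≤ μ ^ 2 / 2 * G ^ 2 + 3 / 2 * (s ^ 2 * L ^ 2) + 3 * (s ^ 2 * H) := by
  have hL : -μ * s * G * L ≤ μ ^ 2 / 6 * G ^ 2 + 3 / 2 * (s ^ 2 * L ^ 2) := by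
    nlinarith [sq_nonneg (μ * G + 3 * s * L)]
  have hQ' : -(2 * μ * s * Q) ≤ μ ^ 2 / 3 * G ^ 2 + 3 * (s ^ 2 * H) := by
    have hH' : 0 ≤ 3 * (s ^ 2 * H) := by positivity
    refine (abs_le_of_sq_le_sq' ?_ (by positivity)).2
    linear_combination 4 * mul_le_mul_of_nonneg_left hQ (sq_nonneg (μ * s))
      + sq_nonneg (μ ^ 2 / 3 * G ^ 2 - 3 * (s ^ 2 * H))
  nlinarith

theorem neg_mul_rpow_mul_add_le {μ t G L Q H : ℝ} (ht : 0 < t) (hH : 0 ≤ H)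
    (hQ : Q ^ 2 ≤ G ^ 2 * H) :
    -μ * (t ^ μ * (G * L + 2 * Q))
      ≤ μ ^ 2 / 2 * (t ^ (μ - 1) * G ^ 2) + 3 / 2 * (t ^ (μ + 1) * L ^ 2)
        + 3 * (t ^ (μ + 1) * H) := by
  have hμ : t ^ μ = t ^ (μ - 1) * t := by rw [← rpow_add_one ht.ne', sub_add_cancel]
  have hμ' : t ^ (μ + 1) = t ^ (μ - 1) * t ^ 2 := by
    rw [← rpow_natCast, ← rpow_add ht]; ring_nf
  have h := mul_le_mul_of_nonneg_left (neg_mul_mul_add_le (μ := μ) (s := t) (L := L) hH hQ)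
    (rpow_nonneg ht.le (μ - 1))
  rw [hμ, hμ']
  linarith

theorem Fin.insertNth_eq_insertNth_zero_add_single {n : ℕ} {M : Type*} [AddZeroClass M]
    (i : Fin (n + 1)) (a : M) (y : Fin n → M) :
    (i.insertNth a y : Fin (n + 1) → M) = i.insertNth 0 y + Pi.single i a := by
  ext j
  rcases Fin.eq_self_or_eq_succAbove i j with rfl | ⟨k, rfl⟩ <;> simp

section Torus

variable {d : ℕ} {F : Type*} [NormedAddCommGroup F]

theorem integrableOn_fundDom {f : EuclideanSpace ℝ (Fin d) → F} (hf : Continuous f) :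
    IntegrableOn f (fundDom d) := by
  have hK : IsCompact (WithLp.toLp 2 '' Set.Icc (0 : Fin d → ℝ) 1) :=
    isCompact_Icc.image (PiLp.continuous_toLp 2 _)
  refine (hf.continuousOn.integrableOn_compact hK).mono_set ?_
  intro x hx
  exact ⟨WithLp.ofLp x, ⟨fun j => (hx j).1, fun j => (hx j).2.le⟩, rfl⟩

variable [NormedSpace ℝ F]

theorem setIntegral_fundDom (f : EuclideanSpace ℝ (Fin d) → F) :
    ∫ x in fundDom d, f x = ∫ y in Set.Icc (0 : Fin d → ℝ) 1, f (WithLp.toLp 2 y) := by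
  have hpre : WithLp.toLp 2 ⁻¹' fundDom d = Set.pi Set.univ fun _ => Set.Ico (0 : ℝ) 1 := by
    ext y; simp [fundDom]
  rw [← (PiLp.volume_preserving_toLp (Fin d)).setIntegral_preimage_emb
    (MeasurableEquiv.toLp 2 (Fin d → ℝ)).measurableEmbedding, hpre, volume_pi]
  exact setIntegral_congr_set Measure.univ_pi_Ico_ae_eq_Icc

theorem integral_Icc_fderiv_single_eq_zero [CompleteSpace F] {n : ℕ}
    {G : (Fin (n + 1) → ℝ) → F} (hG : ContDiff ℝ 1 G) (i : Fin (n + 1))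
    (hper : ∀ y, G (y + Pi.single i 1) = G y) :
    ∫ y in Set.Icc (0 : Fin (n + 1) → ℝ) 1, fderiv ℝ G y (Pi.single i 1) = 0 := by
  set f : Fin (n + 1) → (Fin (n + 1) → ℝ) → F := Pi.single i G
  set f' : Fin (n + 1) → (Fin (n + 1) → ℝ) → (Fin (n + 1) → ℝ) →L[ℝ] F :=
    Pi.single i (fderiv ℝ G)
  have hdiv : ∀ y, ∑ j, f' j y (Pi.single j 1) = fderiv ℝ G y (Pi.single i 1) := fun y => by
    rw [Fintype.sum_eq_single i fun j hj => by simp [f', hj]]; simp [f']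
  have Hc : ∀ j, ContinuousOn (f j) (Set.Icc 0 1) := fun j => by
    rcases eq_or_ne j i with rfl | hj
    · simpa [f] using hG.continuous.continuousOn
    · simp only [f, Pi.single_eq_of_ne hj]
      exact continuousOn_const
  have Hd : ∀ y j, HasFDerivAt (f j) (f' j y) y := fun y j => by
    rcases eq_or_ne j i with rfl | hj
    · simpa [f, f'] using (hG.differentiable one_ne_zero y).hasFDerivAt
    · simp only [f, f', Pi.single_eq_of_ne hj]
      exact hasFDerivAt_const 0 y
  have Hi : IntegrableOn (fun y => ∑ j, f' j y (Pi.single j 1)) (Set.Icc 0 1) := by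
    simp only [hdiv]
    exact ((hG.continuous_fderiv one_ne_zero).clm_apply continuous_const).integrableOn_Icc
  have h := integral_divergence_of_hasFDerivAt_off_countable' 0 1 zero_le_one f f' ∅
    Set.countable_empty Hc (fun y _ => Hd y) Hi
  simp only [hdiv] at h
  rw [h, Fintype.sum_eq_single i fun j hj => by simp [f, hj]]
  simp [f, Fin.insertNth_eq_insertNth_zero_add_single _ (1 : ℝ), hper]

end Torus

theorem integral_pder_eq_zero {d : ℕ} {g : EuclideanSpace ℝ (Fin d) → ℝ} (hg : ContDiff ℝ 1 g)
    (hp : ZPeriodic g) (i : Fin d) : ∫ x in fundDom d, pder i g x = 0 := by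
  obtain ⟨n, rfl⟩ := Nat.exists_eq_add_one_of_ne_zero i.pos.ne'
  set L := (PiLp.continuousLinearEquiv 2 ℝ (fun _ : Fin (n + 1) => ℝ)).symm
  have hpder : ∀ y, pder i g (WithLp.toLp 2 y) = fderiv ℝ (g ∘ L) y (Pi.single i 1) := fun y => by
    rw [L.comp_right_fderiv]; rfl
  have hper : ∀ y, (g ∘ L) (y + Pi.single i 1) = (g ∘ L) y := fun y => by
    simpa [L, Pi.apply_single (fun _ => ((↑) : ℤ → ℝ)) fun _ => Int.cast_zero]
      using hp (WithLp.toLp 2 y) (Pi.single i 1)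
  rw [setIntegral_fundDom]
  simp only [hpder]
  exact integral_Icc_fderiv_single_eq_zero (hg.comp L.contDiff) i hper

section Weighted

variable {d : ℕ} {θ : EuclideanSpace ℝ (Fin d) → ℝ}

theorem integral_rpow_mul_gradSq_mul_lap_add (hθ : ContDiff ℝ 2 θ) (hθ0 : ∀ x, θ x ≠ 0)
    (hper : ZPeriodic θ) (μ : ℝ) :
    ∫ x in fundDom d, θ x ^ μ * (gradSq θ x * lap θ x + 2 * gradHessGrad θ x)
      = -(μ * ∫ x in fundDom d, θ x ^ (μ - 1) * gradSq θ x ^ 2) := by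
  set V : Fin d → EuclideanSpace ℝ (Fin d) → ℝ := fun i y => θ y ^ μ * gradSq θ y * pder i θ y
  have hV : ∀ i, ContDiff ℝ 1 (V i) := fun i =>
    (((hθ.rpow_const_of_ne hθ0).of_le (by norm_num)).mul
      (contDiff_gradSq hθ (by norm_num))).mul (contDiff_pder hθ (by norm_num) i)
  have hVper : ∀ i, ZPeriodic (V i) := fun i x k => by
    simp only [V, hper x k, hper.gradSq x k, hper.pder i x k]
  have hpow : ∀ p : ℝ, Continuous fun x => θ x ^ p := fun p =>
    hθ.continuous.rpow_const fun x => Or.inl (hθ0 x)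
  have hG := (contDiff_gradSq hθ (m := 0) (by norm_num)).continuous
  have hL := (contDiff_lap hθ (m := 0) (by norm_num)).continuous
  have hQ := (contDiff_gradHessGrad hθ (m := 0) (by norm_num)).continuous
  have hdiv : ∫ x in fundDom d, ∑ i, pder i (V i) x = 0 := by
    rw [integral_finsetSum _ fun i _ =>
      integrableOn_fundDom (contDiff_pder (hV i) (m := 0) (by norm_num) i).continuous]
    exact Finset.sum_eq_zero fun i _ => integral_pder_eq_zero (hV i) (hVper i) i
  rw [← integral_const_mul, eq_neg_iff_add_eq_zero,
    ← integral_add (integrableOn_fundDom (by fun_prop)) (integrableOn_fundDom (by fun_prop)), ← hdiv]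
  congr 1; ext x
  rw [sum_pder_rpow_mul_gradSq_mul_pder (hθ.differentiable (by norm_num) x)
    (fun j => (contDiff_pder hθ (m := 1) (by norm_num) j).differentiable (by norm_num) x) (hθ0 x)]
  ring

theorem neg_mul_integral_rpow_mul_gradSq_mul_lap_add_le (hθ : ContDiff ℝ 2 θ)
    (hpos : ∀ x, 0 < θ x) (μ : ℝ) :
    -μ * ∫ x in fundDom d, θ x ^ μ * (gradSq θ x * lap θ x + 2 * gradHessGrad θ x)
      ≤ μ ^ 2 / 2 * (∫ x in fundDom d, θ x ^ (μ - 1) * gradSq θ x ^ 2)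
        + 3 / 2 * (∫ x in fundDom d, θ x ^ (μ + 1) * lap θ x ^ 2)
        + 3 * ∫ x in fundDom d, θ x ^ (μ + 1) * hessSq θ x := by
  have hpow : ∀ p : ℝ, Continuous fun x => θ x ^ p := fun p =>
    hθ.continuous.rpow_const fun x => Or.inl (hpos x).ne'
  have hG := (contDiff_gradSq hθ (m := 0) (by norm_num)).continuous
  have hL := (contDiff_lap hθ (m := 0) (by norm_num)).continuous
  have hH := (contDiff_hessSq hθ (m := 0) (by norm_num)).continuous
  have hQ := (contDiff_gradHessGrad hθ (m := 0) (by norm_num)).continuous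
  have hA : IntegrableOn (fun x => θ x ^ (μ - 1) * gradSq θ x ^ 2) (fundDom d) :=
    integrableOn_fundDom (by fun_prop)
  have hB : IntegrableOn (fun x => θ x ^ (μ + 1) * lap θ x ^ 2) (fundDom d) :=
    integrableOn_fundDom (by fun_prop)
  have hC : IntegrableOn (fun x => θ x ^ (μ + 1) * hessSq θ x) (fundDom d) :=
    integrableOn_fundDom (by fun_prop)
  have hAB : IntegrableOn (fun x => μ ^ 2 / 2 * (θ x ^ (μ - 1) * gradSq θ x ^ 2)
      + 3 / 2 * (θ x ^ (μ + 1) * lap θ x ^ 2)) (fundDom d) :=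
    (hA.const_mul _).add (hB.const_mul _)
  rw [← integral_const_mul, ← integral_const_mul, ← integral_const_mul, ← integral_const_mul,
    ← integral_add (hA.const_mul _) (hB.const_mul _), ← integral_add hAB (hC.const_mul _)]
  exact integral_mono (integrableOn_fundDom (by fun_prop)) (hAB.add (hC.const_mul _))
    fun x => neg_mul_rpow_mul_add_le (hpos x) (hessSq_nonneg θ x) (gradHessGrad_sq_le θ x)

end Weighted

theorem weighted_bernis_inequality_general (d : ℕ) (μ : ℝ)
    (θ : EuclideanSpace ℝ (Fin d) → ℝ)
    (hsm : ContDiff ℝ (⊤ : ℕ∞) θ)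
    (hpos : ∀ x, 0 < θ x)
    (hper : ZPeriodic θ) :
    (μ ^ 2 / 3) * ∫ x in fundDom d, θ x ^ (μ - 1) * (gradSq θ x) ^ 2
      ≤ (∫ x in fundDom d, θ x ^ (μ + 1) * (lap θ x) ^ 2)
        + 2 * ∫ x in fundDom d, θ x ^ (μ + 1) * hessSq θ x := by
  have hθ : ContDiff ℝ 2 θ := contDiff_infty.1 hsm 2
  have h := neg_mul_integral_rpow_mul_gradSq_mul_lap_add_le hθ hpos μ
  rw [integral_rpow_mul_gradSq_mul_lap_add hθ (fun x => (hpos x).ne') hper μ] at h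
  linear_combination (2 / 3) * h

/-- **Weighted Bernis-type inequality** (Proposition `P:refD.1v2`): for any real `μ`
and smooth positive `θ` on `𝕋^d`,
`(μ²/3) ∫ θ^{μ-1}|∇θ|⁴ ≤ ∫ θ^{μ+1}(Δθ)² + 2 ∫ θ^{μ+1}|∇∇θ|²`. -/
theorem weighted_bernis_inequality (d : ℕ) (hd : 1 ≤ d) (μ : ℝ)
    (θ : EuclideanSpace ℝ (Fin d) → ℝ)
    (hsm : ContDiff ℝ (⊤ : ℕ∞) θ)
    (hpos : ∀ x, 0 < θ x)
    (hper : ZPeriodic θ) :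
    (μ ^ 2 / 3) * ∫ x in fundDom d, θ x ^ (μ - 1) * (gradSq θ x) ^ 2
      ≤ (∫ x in fundDom d, θ x ^ (μ + 1) * (lap θ x) ^ 2)
        + 2 * ∫ x in fundDom d, θ x ^ (μ + 1) * hessSq θ x :=
  weighted_bernis_inequality_general d μ θ hsm hpos hper
end

section
/- Let g ≥ 0 and μ ≥ 0, and let h be a smooth, strictly positive solution on [0,T] of the one-dimensional thin-film equation ∂_t h − ∂_x( h ∂_x(g h − μ ∂_x^2 h) ) = 0 on 𝕋 = ℝ/ℤ. Then for every t ∈ [0,T], (d/dt) ∫_𝕋 h(t,x)^2 dx ≤ 0 and (d/dt) ∫_𝕋 (∂_x h(t,x))^2 dx ≤ 0. -/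
open MeasureTheory Real

namespace ThinFilmAux

lemma one_le_itop : (1 : WithTop ℕ∞) ≤ ((⊤:ℕ∞) : WithTop ℕ∞) := by
  rw [show (1 : WithTop ℕ∞) = ((1:ℕ∞) : WithTop ℕ∞) by rfl]
  exact WithTop.coe_le_coe.mpr le_top

lemma two_le_itop : (2 : WithTop ℕ∞) ≤ ((⊤:ℕ∞) : WithTop ℕ∞) := by
  rw [show (2 : WithTop ℕ∞) = ((2:ℕ∞) : WithTop ℕ∞) by rfl]
  exact WithTop.coe_le_coe.mpr le_top

/-- directional (partial) derivative of a function of two real variables -/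
noncomputable def pd (f : ℝ × ℝ → ℝ) (v : ℝ × ℝ) (p : ℝ × ℝ) : ℝ := fderiv ℝ f p v

/-- partial derivative in the second (space) variable -/
noncomputable def X1 (f : ℝ × ℝ → ℝ) : ℝ × ℝ → ℝ := pd f (0, 1)

/-- partial derivative in the first (time) variable -/
noncomputable def T1 (f : ℝ × ℝ → ℝ) : ℝ × ℝ → ℝ := pd f (1, 0)

/-- the flux `h (g h_x - μ h_xxx)` -/
noncomputable def GG (g μ : ℝ) (h : ℝ × ℝ → ℝ) : ℝ × ℝ → ℝ :=
  fun p => h p * (g * X1 h p - μ * X1 (X1 (X1 h)) p)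

lemma pd_contDiff {f : ℝ × ℝ → ℝ} (hf : ContDiff ℝ (⊤ : ℕ∞) f) (v : ℝ × ℝ) :
    ContDiff ℝ (⊤ : ℕ∞) (pd f v) :=
  (hf.fderiv_right (m := ((⊤:ℕ∞) : WithTop ℕ∞)) (by simp)).clm_apply contDiff_const

lemma slice_x {f : ℝ × ℝ → ℝ} (hf : ContDiff ℝ (⊤ : ℕ∞) f) (t x : ℝ) :
    HasDerivAt (fun y => f (t, y)) (X1 f (t, x)) x := by
  have H : HasFDerivAt f (fderiv ℝ f (t, x)) (t, x) :=
    ((hf.differentiable (by simp)) (t, x)).hasFDerivAt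
  have L : HasDerivAt (fun y : ℝ => ((t, y) : ℝ × ℝ)) ((0 : ℝ), (1 : ℝ)) x :=
    (hasDerivAt_const x t).prodMk (hasDerivAt_id x)
  simpa [X1, pd, Function.comp_def] using H.comp_hasDerivAt x L

lemma slice_t {f : ℝ × ℝ → ℝ} (hf : ContDiff ℝ (⊤ : ℕ∞) f) (t x : ℝ) :
    HasDerivAt (fun s => f (s, x)) (T1 f (t, x)) t := by
  have H : HasFDerivAt f (fderiv ℝ f (t, x)) (t, x) :=
    ((hf.differentiable (by simp)) (t, x)).hasFDerivAt
  have L : HasDerivAt (fun s : ℝ => ((s, x) : ℝ × ℝ)) ((1 : ℝ), (0 : ℝ)) t :=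
    (hasDerivAt_id t).prodMk (hasDerivAt_const t x)
  simpa [T1, pd, Function.comp_def] using H.comp_hasDerivAt t L

lemma pd_swap {f : ℝ × ℝ → ℝ} (hf : ContDiff ℝ (⊤ : ℕ∞) f) (v w : ℝ × ℝ) (p : ℝ × ℝ) :
    pd (pd f v) w p = fderiv ℝ (fderiv ℝ f) p w v := by
  have hc : DifferentiableAt ℝ (fderiv ℝ f) p :=
    ((hf.fderiv_right (m := ((⊤:ℕ∞) : WithTop ℕ∞)) (by simp)).differentiable (by simp)) p
  have key := fderiv_clm_apply hc (differentiableAt_const v)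
  show fderiv ℝ (fun q => fderiv ℝ f q v) p w = (fderiv ℝ (fderiv ℝ f) p w) v
  rw [show (fun q => fderiv ℝ f q v) = (fun q => (fderiv ℝ f q) ((fun _ => v) q)) from rfl, key]
  simp

lemma pd_comm {f : ℝ × ℝ → ℝ} (hf : ContDiff ℝ (⊤ : ℕ∞) f) (v w : ℝ × ℝ) (p : ℝ × ℝ) :
    pd (pd f v) w p = pd (pd f w) v p := by
  rw [pd_swap hf v w p, pd_swap hf w v p]
  exact (hf.contDiffAt.isSymmSndFDerivAt (by rw [minSmoothness_of_isRCLikeNormedField]; exact two_le_itop)).eq w v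

lemma fderiv_periodic {f : ℝ × ℝ → ℝ} (hf : Differentiable ℝ f) {c : ℝ × ℝ}
    (hc : ∀ p, f (p + c) = f p) (p : ℝ × ℝ) : fderiv ℝ f (p + c) = fderiv ℝ f p := by
  have H : HasFDerivAt (fun q => f (q + c))
      ((fderiv ℝ f (p + c)).comp (ContinuousLinearMap.id ℝ (ℝ × ℝ))) p := by
    have h1 : HasFDerivAt (fun q : ℝ × ℝ => q + c) (ContinuousLinearMap.id ℝ (ℝ × ℝ)) p := by
      simpa using (hasFDerivAt_id p).add_const c
    exact (hf (p + c)).hasFDerivAt.comp p h1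
  have e : (fun q => f (q + c)) = f := funext hc
  rw [e] at H
  rw [ContinuousLinearMap.comp_id] at H
  exact H.fderiv.symm ▸ rfl

lemma pd_periodic {f : ℝ × ℝ → ℝ} (hf : ContDiff ℝ (⊤ : ℕ∞) f)
    (hper : ∀ a b, f (a, b + 1) = f (a, b)) (v : ℝ × ℝ) (a b : ℝ) :
    pd f v (a, b + 1) = pd f v (a, b) := by
  have hc : ∀ p : ℝ × ℝ, f (p + ((0 : ℝ), (1 : ℝ))) = f p := by
    intro p
    have e : p + ((0 : ℝ), (1 : ℝ)) = (p.1, p.2 + 1) := by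
      cases p; simp [Prod.ext_iff]
    rw [e]; exact hper p.1 p.2
  have key := fderiv_periodic (hf.differentiable (by simp)) hc (a, b)
  have e : ((a, b) : ℝ × ℝ) + (0, 1) = (a, b + 1) := by simp
  rw [e] at key
  show fderiv ℝ f (a, b+1) v = fderiv ℝ f (a, b) v
  rw [key]

lemma param_hasDerivAt (F F' : ℝ × ℝ → ℝ) (hF : Continuous F) (hF' : Continuous F')
    (hd : ∀ p : ℝ × ℝ, HasDerivAt (fun u => F (u, p.2)) (F' p) p.1) (t : ℝ) :
    HasDerivAt (fun s => ∫ x in (0:ℝ)..1, F (s, x)) (∫ x in (0:ℝ)..1, F' (t, x)) t := by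
  obtain ⟨C, hC⟩ :=
    ((isCompact_Icc.prod isCompact_Icc :
      IsCompact (Set.Icc (t-1) (t+1) ×ˢ Set.Icc (0:ℝ) 1))).exists_bound_of_continuousOn
      hF'.continuousOn
  have main := intervalIntegral.hasDerivAt_integral_of_dominated_loc_of_deriv_le
    (F := fun s x => F (s, x)) (F' := fun s x => F' (s, x)) (x₀ := t) (a := 0) (b := 1)
    (μ := volume) (bound := fun _ => C) (s := Metric.ball t 1) (Metric.ball_mem_nhds t one_pos)
    (Filter.Eventually.of_forall (fun s =>
      (hF.comp (continuous_const.prodMk continuous_id)).aestronglyMeasurable))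
    ((hF.comp (continuous_const.prodMk continuous_id)).intervalIntegrable 0 1)
    (hF'.comp (continuous_const.prodMk continuous_id)).aestronglyMeasurable
    ?_ intervalIntegrable_const ?_
  · exact main.2
  · refine Filter.Eventually.of_forall (fun x hx s hs => ?_)
    refine hC (s, x) ⟨?_, ?_⟩
    · have h1 := Metric.mem_ball.mp hs
      rw [Real.dist_eq] at h1
      have h2 := abs_lt.mp h1
      constructor <;> [linarith [h2.1]; linarith [h2.2]]
    · rw [Set.uIoc_of_le (zero_le_one (α := ℝ))] at hx
      exact ⟨le_of_lt hx.1, hx.2⟩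
  · exact Filter.Eventually.of_forall (fun x hx s hs => hd (s, x))

lemma ibp_periodic (u v u' v' : ℝ → ℝ)
    (hu : ∀ x, HasDerivAt u (u' x) x) (hv : ∀ x, HasDerivAt v (v' x) x)
    (hcu : Continuous u) (hcv : Continuous v) (hcu' : Continuous u') (hcv' : Continuous v')
    (hper : u 1 * v 1 = u 0 * v 0) :
    ∫ x in (0:ℝ)..1, u x * v' x = - ∫ x in (0:ℝ)..1, u' x * v x := by
  have h := intervalIntegral.integral_deriv_mul_eq_sub (a := 0) (b := 1)
    (fun x _ => hu x) (fun x _ => hv x)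
    (hcu'.intervalIntegrable 0 1) (hcv'.intervalIntegrable 0 1)
  rw [intervalIntegral.integral_add (f := fun x => u' x * v x) (g := fun x => u x * v' x) ((hcu'.mul hcv).intervalIntegrable 0 1)
    ((hcu.mul hcv').intervalIntegrable 0 1), hper, sub_self] at h
  linarith

lemma integral_deriv_periodic (w w' : ℝ → ℝ) (hw : ∀ x, HasDerivAt w (w' x) x)
    (hcw' : Continuous w') (hper : w 1 = w 0) : ∫ x in (0:ℝ)..1, w' x = 0 := by
  rw [intervalIntegral.integral_eq_sub_of_hasDerivAt (fun x _ => hw x)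
    (hcw'.intervalIntegrable 0 1), hper, sub_self]

lemma calc_main (g μ : ℝ) (hg : 0 ≤ g) (hμ : 0 ≤ μ) (h : ℝ × ℝ → ℝ)
    (hsm : ContDiff ℝ (⊤ : ℕ∞) h) (hper : ∀ a b, h (a, b + 1) = h (a, b))
    (hpos : ∀ a b, 0 < h (a, b)) (t : ℝ)
    (heqt : ∀ x, T1 h (t, x) = X1 (GG g μ h) (t, x)) :
    (∫ x in (0:ℝ)..1, 2 * h (t, x) * T1 h (t, x)) ≤ 0 ∧
    (∫ x in (0:ℝ)..1, 2 * X1 h (t, x) * T1 (X1 h) (t, x)) ≤ 0 := by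
  -- smoothness
  have s1 : ContDiff ℝ (⊤ : ℕ∞) (X1 h) := pd_contDiff hsm _
  have s2 : ContDiff ℝ (⊤ : ℕ∞) (X1 (X1 h)) := pd_contDiff s1 _
  have s3 : ContDiff ℝ (⊤ : ℕ∞) (X1 (X1 (X1 h))) := pd_contDiff s2 _
  have sT : ContDiff ℝ (⊤ : ℕ∞) (T1 h) := pd_contDiff hsm _
  have sG : ContDiff ℝ (⊤ : ℕ∞) (GG g μ h) := by
    unfold GG
    exact hsm.mul ((contDiff_const.mul s1).sub (contDiff_const.mul s3))
  have sGX : ContDiff ℝ (⊤ : ℕ∞) (X1 (GG g μ h)) := pd_contDiff sG _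
  have sGXX : ContDiff ℝ (⊤ : ℕ∞) (X1 (X1 (GG g μ h))) := pd_contDiff sGX _
  -- continuity of slices at time t
  have cs : ∀ f : ℝ × ℝ → ℝ, Continuous f → Continuous (fun x : ℝ => f (t, x)) :=
    fun f hf => hf.comp (continuous_const.prodMk continuous_id)
  have c0 := cs h hsm.continuous
  have c1 := cs _ s1.continuous
  have c2 := cs _ s2.continuous
  have c3 := cs _ s3.continuous
  have cG := cs _ sG.continuous
  have cGX := cs _ sGX.continuous
  have cGXX := cs _ sGXX.continuous
  -- periodicity
  have P1 : ∀ a b, X1 h (a, b + 1) = X1 h (a, b) := pd_periodic hsm hper _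
  have P2 : ∀ a b, X1 (X1 h) (a, b + 1) = X1 (X1 h) (a, b) := pd_periodic s1 P1 _
  have P3 : ∀ a b, X1 (X1 (X1 h)) (a, b + 1) = X1 (X1 (X1 h)) (a, b) := pd_periodic s2 P2 _
  have PG : ∀ a b, GG g μ h (a, b + 1) = GG g μ h (a, b) := by
    intro a b; simp only [GG]; rw [hper, P1, P3]
  have PGX : ∀ a b, X1 (GG g μ h) (a, b + 1) = X1 (GG g μ h) (a, b) := pd_periodic sG PG _
  have bd : ∀ f : ℝ × ℝ → ℝ, (∀ a b, f (a, b + 1) = f (a, b)) → f (t, 1) = f (t, 0) :=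
    fun f hf => by simpa using hf t 0
  -- spatial derivatives at time t
  have d0 : ∀ x, HasDerivAt (fun y => h (t, y)) (X1 h (t, x)) x := slice_x hsm t
  have d1 : ∀ x, HasDerivAt (fun y => X1 h (t, y)) (X1 (X1 h) (t, x)) x := slice_x s1 t
  have d2 : ∀ x, HasDerivAt (fun y => X1 (X1 h) (t, y)) (X1 (X1 (X1 h)) (t, x)) x :=
    slice_x s2 t
  have dG : ∀ x, HasDerivAt (fun y => GG g μ h (t, y)) (X1 (GG g μ h) (t, x)) x :=
    slice_x sG t
  have dGX : ∀ x, HasDerivAt (fun y => X1 (GG g μ h) (t, y)) (X1 (X1 (GG g μ h)) (t, x)) x :=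
    slice_x sGX t
  -- nonnegativity of the three basic integrals
  have A_nn : 0 ≤ ∫ x in (0:ℝ)..1, h (t, x) * (X1 h (t, x)) ^ 2 :=
    intervalIntegral.integral_nonneg zero_le_one
      (fun x _ => mul_nonneg (hpos t x).le (sq_nonneg _))
  have B_nn : 0 ≤ ∫ x in (0:ℝ)..1, h (t, x) * (X1 (X1 h) (t, x)) ^ 2 :=
    intervalIntegral.integral_nonneg zero_le_one
      (fun x _ => mul_nonneg (hpos t x).le (sq_nonneg _))
  have D_nn : 0 ≤ ∫ x in (0:ℝ)..1, h (t, x) * (X1 (X1 (X1 h)) (t, x)) ^ 2 :=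
    intervalIntegral.integral_nonneg zero_le_one
      (fun x _ => mul_nonneg (hpos t x).le (sq_nonneg _))
  -- ∫ h₁² h₂ = 0
  have K : ∫ x in (0:ℝ)..1, (X1 h (t, x)) ^ 2 * X1 (X1 h) (t, x) = 0 := by
    have K3 : ∫ x in (0:ℝ)..1, 3 * ((X1 h (t, x)) ^ 2 * X1 (X1 h) (t, x)) = 0 := by
      refine integral_deriv_periodic (fun x => (X1 h (t, x)) ^ 3) _
        (fun x => ?_) (continuous_const.mul ((c1.pow 2).mul c2)) (by simp only [bd _ P1])
      have := (d1 x).fun_pow 3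
      simpa [mul_assoc] using this
    rw [intervalIntegral.integral_const_mul] at K3
    linarith
  -- ∫ (h h₁) h₃ = - ∫ h h₂²
  have J : ∫ x in (0:ℝ)..1, (h (t, x) * X1 h (t, x)) * X1 (X1 (X1 h)) (t, x)
      = - ∫ x in (0:ℝ)..1, h (t, x) * (X1 (X1 h) (t, x)) ^ 2 := by
    have ibp1 := ibp_periodic (fun x => h (t, x) * X1 h (t, x))
      (fun x => X1 (X1 h) (t, x))
      (fun x => X1 h (t, x) * X1 h (t, x) + h (t, x) * X1 (X1 h) (t, x))
      (fun x => X1 (X1 (X1 h)) (t, x))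
      (fun x => (d0 x).mul (d1 x)) d2
      (c0.mul c1) c2 ((c1.mul c1).add (c0.mul c2)) c3
      (by simp only [bd _ hper, bd _ P1, bd _ P2])
    rw [ibp1]
    have e : ∀ x : ℝ, (X1 h (t, x) * X1 h (t, x) + h (t, x) * X1 (X1 h) (t, x)) * X1 (X1 h) (t, x)
        = (X1 h (t, x)) ^ 2 * X1 (X1 h) (t, x) + h (t, x) * (X1 (X1 h) (t, x)) ^ 2 := by
      intro x; ring
    rw [intervalIntegral.integral_congr (g := fun x =>
        (X1 h (t, x)) ^ 2 * X1 (X1 h) (t, x) + h (t, x) * (X1 (X1 h) (t, x)) ^ 2)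
        (fun x _ => e x),
      intervalIntegral.integral_add (f := fun x => (X1 h (t, x)) ^ 2 * X1 (X1 h) (t, x))
          (g := fun x => h (t, x) * (X1 (X1 h) (t, x)) ^ 2) (((c1.pow 2).mul c2).intervalIntegrable 0 1)
        ((c0.mul (c2.pow 2)).intervalIntegrable 0 1), K, zero_add]
  constructor
  · -- first energy
    have step1 : ∫ x in (0:ℝ)..1, 2 * h (t, x) * T1 h (t, x)
        = ∫ x in (0:ℝ)..1, (2 * h (t, x)) * X1 (GG g μ h) (t, x) :=
      intervalIntegral.integral_congr (fun x _ => by rw [heqt x])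
    have step2 : ∫ x in (0:ℝ)..1, (2 * h (t, x)) * X1 (GG g μ h) (t, x)
        = - ∫ x in (0:ℝ)..1, (2 * X1 h (t, x)) * GG g μ h (t, x) :=
      ibp_periodic (fun x => 2 * h (t, x)) (fun x => GG g μ h (t, x))
        (fun x => 2 * X1 h (t, x)) (fun x => X1 (GG g μ h) (t, x))
        (fun x => (d0 x).const_mul 2) dG
        (continuous_const.mul c0) cG (continuous_const.mul c1) cGX
        (by simp only [bd _ hper, bd _ PG])
    have step3 : ∫ x in (0:ℝ)..1, (2 * X1 h (t, x)) * GG g μ h (t, x)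
        = g * (2 * ∫ x in (0:ℝ)..1, h (t, x) * (X1 h (t, x)) ^ 2)
          - μ * (2 * ∫ x in (0:ℝ)..1, (h (t, x) * X1 h (t, x)) * X1 (X1 (X1 h)) (t, x)) := by
      have e : ∀ x : ℝ, (2 * X1 h (t, x)) * GG g μ h (t, x)
          = g * (2 * (h (t, x) * (X1 h (t, x)) ^ 2))
            - μ * (2 * ((h (t, x) * X1 h (t, x)) * X1 (X1 (X1 h)) (t, x))) := by
        intro x; simp only [GG]; ring
      rw [intervalIntegral.integral_congr (g := fun x =>
          g * (2 * (h (t, x) * (X1 h (t, x)) ^ 2))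
            - μ * (2 * ((h (t, x) * X1 h (t, x)) * X1 (X1 (X1 h)) (t, x)))) (fun x _ => e x),
        intervalIntegral.integral_sub (f := fun x => g * (2 * (h (t, x) * (X1 h (t, x)) ^ 2)))
          (g := fun x => μ * (2 * ((h (t, x) * X1 h (t, x)) * X1 (X1 (X1 h)) (t, x))))
          ((continuous_const.mul (continuous_const.mul (c0.mul (c1.pow 2)))).intervalIntegrable 0 1)
          ((continuous_const.mul (continuous_const.mul ((c0.mul c1).mul c3))).intervalIntegrable 0 1),
        intervalIntegral.integral_const_mul, intervalIntegral.integral_const_mul,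
        intervalIntegral.integral_const_mul, intervalIntegral.integral_const_mul]
    rw [step1, step2, step3, J]
    nlinarith [mul_nonneg hg A_nn, mul_nonneg hμ B_nn]
  · -- second energy
    have schwarz : ∀ x : ℝ, T1 (X1 h) (t, x) = X1 (T1 h) (t, x) := fun x =>
      pd_comm hsm (0, 1) (1, 0) (t, x)
    have keyX : ∀ x : ℝ, X1 (T1 h) (t, x) = X1 (X1 (GG g μ h)) (t, x) := by
      intro x
      have hL := slice_x sT t x
      rw [show (fun y => T1 h (t, y)) = (fun y => X1 (GG g μ h) (t, y)) from
        funext heqt] at hL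
      exact hL.unique (slice_x sGX t x)
    have step1 : ∫ x in (0:ℝ)..1, 2 * X1 h (t, x) * T1 (X1 h) (t, x)
        = ∫ x in (0:ℝ)..1, (2 * X1 h (t, x)) * X1 (X1 (GG g μ h)) (t, x) :=
      intervalIntegral.integral_congr (fun x _ => by rw [schwarz x, keyX x])
    have step2 : ∫ x in (0:ℝ)..1, (2 * X1 h (t, x)) * X1 (X1 (GG g μ h)) (t, x)
        = - ∫ x in (0:ℝ)..1, (2 * X1 (X1 h) (t, x)) * X1 (GG g μ h) (t, x) :=
      ibp_periodic (fun x => 2 * X1 h (t, x)) (fun x => X1 (GG g μ h) (t, x))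
        (fun x => 2 * X1 (X1 h) (t, x)) (fun x => X1 (X1 (GG g μ h)) (t, x))
        (fun x => (d1 x).const_mul 2) dGX
        (continuous_const.mul c1) cGX (continuous_const.mul c2) cGXX
        (by simp only [bd _ P1, bd _ PGX])
    have step3 : ∫ x in (0:ℝ)..1, (2 * X1 (X1 h) (t, x)) * X1 (GG g μ h) (t, x)
        = - ∫ x in (0:ℝ)..1, (2 * X1 (X1 (X1 h)) (t, x)) * GG g μ h (t, x) :=
      ibp_periodic (fun x => 2 * X1 (X1 h) (t, x)) (fun x => GG g μ h (t, x))
        (fun x => 2 * X1 (X1 (X1 h)) (t, x)) (fun x => X1 (GG g μ h) (t, x))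
        (fun x => (d2 x).const_mul 2) dG
        (continuous_const.mul c2) cG (continuous_const.mul c3) cGX
        (by simp only [bd _ P2, bd _ PG])
    have step4 : ∫ x in (0:ℝ)..1, (2 * X1 (X1 (X1 h)) (t, x)) * GG g μ h (t, x)
        = g * (2 * ∫ x in (0:ℝ)..1, (h (t, x) * X1 h (t, x)) * X1 (X1 (X1 h)) (t, x))
          - μ * (2 * ∫ x in (0:ℝ)..1, h (t, x) * (X1 (X1 (X1 h)) (t, x)) ^ 2) := by
      have e : ∀ x : ℝ, (2 * X1 (X1 (X1 h)) (t, x)) * GG g μ h (t, x)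
          = g * (2 * ((h (t, x) * X1 h (t, x)) * X1 (X1 (X1 h)) (t, x)))
            - μ * (2 * (h (t, x) * (X1 (X1 (X1 h)) (t, x)) ^ 2)) := by
        intro x; simp only [GG]; ring
      rw [intervalIntegral.integral_congr (g := fun x =>
          g * (2 * ((h (t, x) * X1 h (t, x)) * X1 (X1 (X1 h)) (t, x)))
            - μ * (2 * (h (t, x) * (X1 (X1 (X1 h)) (t, x)) ^ 2))) (fun x _ => e x),
        intervalIntegral.integral_sub (f := fun x => g * (2 * ((h (t, x) * X1 h (t, x)) * X1 (X1 (X1 h)) (t, x))))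
          (g := fun x => μ * (2 * (h (t, x) * (X1 (X1 (X1 h)) (t, x)) ^ 2)))
          ((continuous_const.mul (continuous_const.mul ((c0.mul c1).mul c3))).intervalIntegrable 0 1)
          ((continuous_const.mul (continuous_const.mul (c0.mul (c3.pow 2)))).intervalIntegrable 0 1),
        intervalIntegral.integral_const_mul, intervalIntegral.integral_const_mul,
        intervalIntegral.integral_const_mul, intervalIntegral.integral_const_mul]
    rw [step1, step2, step3, step4, J]
    nlinarith [mul_nonneg hg B_nn, mul_nonneg hμ D_nn]

end ThinFilmAux

open ThinFilmAux in
/-- Decay of the `L²`-norms of `h` and `∂ₓh` for the one-dimensional thin-film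
equation `∂ₜh − ∂ₓ(h ∂ₓ(g h − μ ∂ₓ²h)) = 0` on `𝕋 = ℝ/ℤ`
(Proposition `prop:lubrik1`). -/
theorem thinfilm_1d_L2_and_gradL2_decay (g μ : ℝ) (hg : 0 ≤ g) (hμ : 0 ≤ μ)
    (T : ℝ) (h : ℝ × ℝ → ℝ)
    (hsm : ContDiff ℝ (⊤ : ℕ∞) h)
    (hper : ∀ t x, h (t, x + 1) = h (t, x))
    (hpos : ∀ t x, 0 < h (t, x))
    (heq : ∀ t ∈ Set.Icc (0 : ℝ) T, ∀ x : ℝ,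
      deriv (fun s => h (s, x)) t
        - deriv (fun y => h (t, y) *
            deriv (fun z => g * h (t, z)
              - μ * deriv (fun w => deriv (fun v => h (t, v)) w) z) y) x = 0) :
    ∀ t ∈ Set.Icc (0 : ℝ) T,
      deriv (fun s => ∫ x in Set.Ico (0 : ℝ) 1, (h (s, x)) ^ 2) t ≤ 0
      ∧ deriv (fun s => ∫ x in Set.Ico (0 : ℝ) 1,
          (deriv (fun y => h (s, y)) x) ^ 2) t ≤ 0 := by
  intro t htT
  have s1 : ContDiff ℝ (⊤ : ℕ∞) (X1 h) := pd_contDiff hsm _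
  have s2 : ContDiff ℝ (⊤ : ℕ∞) (X1 (X1 h)) := pd_contDiff s1 _
  have sT : ContDiff ℝ (⊤ : ℕ∞) (T1 h) := pd_contDiff hsm _
  have sTX : ContDiff ℝ (⊤ : ℕ∞) (T1 (X1 h)) := pd_contDiff s1 _
  have s3 : ContDiff ℝ (⊤ : ℕ∞) (X1 (X1 (X1 h))) := pd_contDiff s2 _
  have sG : ContDiff ℝ (⊤ : ℕ∞) (GG g μ h) := by
    unfold GG
    exact hsm.mul ((contDiff_const.mul s1).sub (contDiff_const.mul s3))
  -- translate the PDE into the `pd` language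
  have heqt : ∀ x, T1 h (t, x) = X1 (GG g μ h) (t, x) := by
    intro x
    have H := heq t htT x
    have e1 : deriv (fun s => h (s, x)) t = T1 h (t, x) := (slice_t hsm t x).deriv
    have einner : (fun z => g * h (t, z)
        - μ * deriv (fun w => deriv (fun v => h (t, v)) w) z)
        = (fun z => g * h (t, z) - μ * X1 (X1 h) (t, z)) := by
      funext z
      have e0 : (fun w => deriv (fun v => h (t, v)) w) = (fun w => X1 h (t, w)) :=
        funext fun w => (slice_x hsm t w).deriv
      rw [e0, (slice_x s1 t z).deriv]
    have e2 : (fun y => h (t, y) * deriv (fun z => g * h (t, z)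
          - μ * deriv (fun w => deriv (fun v => h (t, v)) w) z) y)
        = (fun y => GG g μ h (t, y)) := by
      funext y
      rw [einner,
        (((slice_x hsm t y).const_mul g).fun_sub ((slice_x s2 t y).const_mul μ)).deriv]
      rfl
    rw [e1, e2, (slice_x sG t x).deriv] at H
    linarith
  have main := calc_main g μ hg hμ h hsm hper hpos t heqt
  constructor
  · -- L² norm of h
    have dE1 : HasDerivAt (fun s => ∫ x in (0:ℝ)..1, (h (s, x)) ^ 2)
        (∫ x in (0:ℝ)..1, 2 * h (t, x) * T1 h (t, x)) t := by
      refine param_hasDerivAt (fun p => (h p) ^ 2) (fun p => 2 * h p * T1 h p)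
        (hsm.continuous.pow 2)
        ((continuous_const.mul hsm.continuous).mul sT.continuous) (fun p => ?_) t
      have := (slice_t hsm p.1 p.2).fun_pow 2
      simpa using this
    have Efun : (fun s => ∫ x in Set.Ico (0 : ℝ) 1, (h (s, x)) ^ 2)
        = (fun s : ℝ => ∫ x in (0:ℝ)..1, (h (s, x)) ^ 2) := by
      funext s
      rw [MeasureTheory.integral_Ico_eq_integral_Ioo,
        intervalIntegral.integral_of_le zero_le_one,
        MeasureTheory.integral_Ioc_eq_integral_Ioo]
    rw [Efun, dE1.deriv]
    exact main.1
  · -- L² norm of h_x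
    have dE2 : HasDerivAt (fun s => ∫ x in (0:ℝ)..1, (X1 h (s, x)) ^ 2)
        (∫ x in (0:ℝ)..1, 2 * X1 h (t, x) * T1 (X1 h) (t, x)) t := by
      refine param_hasDerivAt (fun p => (X1 h p) ^ 2) (fun p => 2 * X1 h p * T1 (X1 h) p)
        (s1.continuous.pow 2)
        ((continuous_const.mul s1.continuous).mul sTX.continuous) (fun p => ?_) t
      have := (slice_t s1 p.1 p.2).fun_pow 2
      simpa using this
    have Efun : (fun s => ∫ x in Set.Ico (0 : ℝ) 1, (deriv (fun y => h (s, y)) x) ^ 2)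
        = (fun s : ℝ => ∫ x in (0:ℝ)..1, (X1 h (s, x)) ^ 2) := by
      funext s
      have e : ∀ x : ℝ, deriv (fun y => h (s, y)) x = X1 h (s, x) :=
        fun x => (slice_x hsm s x).deriv
      simp only [e]
      rw [MeasureTheory.integral_Ico_eq_integral_Ioo,
        intervalIntegral.integral_of_le zero_le_one,
        MeasureTheory.integral_Ioc_eq_integral_Ioo]
    rw [Efun, dE2.deriv]
    exact main.2
end

section
/- Let h be a smooth, strictly positive solution on [0,T] of the one-dimensional Boussinesq equation ∂_t h − ∂_x(h ∂_x h) = 0 on 𝕋 = ℝ/ℤ. Then for every t ∈ [0,T], (d/dt) ∫_𝕋 (∂_x h) arctan(∂_x h) dx + ∫_𝕋 2 h (∂_x^2 h)^2 / (1+(∂_x h)^2)^2 dx = 0; in particular (d/dt) ∫_𝕋 (∂_x h) arctan(∂_x h) dx ≤ 0. -/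
/-!
Write `p = ∂ₓh`. The equation gives `∂ₜp = ∂ₓ²(h p)`, and `Φ(p) = arctan p + p/(1+p²)` is the
derivative of `p arctan p`, so the time derivative of `∫ p arctan p` is `∫ Φ(p) ∂ₓ²(h p)`.
Integrating by parts on the circle turns this into `-∫ Φ'(p) ∂ₓp ∂ₓ(h p)`, where
`Φ'(p) = 2/(1+p²)²` and `∂ₓ(h p) = p² + h ∂ₓp`. The `p²` part is the exact derivative of
`arctan p - p/(1+p²)` and integrates to zero, leaving `-∫ 2h(∂ₓp)²/(1+p²)² ≤ 0`.
-/

open MeasureTheory Real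

noncomputable section

-- Partial derivatives as `deriv` of slices, so that they agree definitionally with the
-- `deriv` expressions in the theorem.
def partialT (f : ℝ × ℝ → ℝ) (z : ℝ × ℝ) : ℝ := deriv (fun s => f (s, z.2)) z.1

def partialX (f : ℝ × ℝ → ℝ) (z : ℝ × ℝ) : ℝ := deriv (fun y => f (z.1, y)) z.2

end

theorem Function.Periodic.deriv {𝕜 F : Type*} [NontriviallyNormedField 𝕜] [NormedAddCommGroup F]
    [NormedSpace 𝕜 F] {g : 𝕜 → F} {c : 𝕜} (hg : Function.Periodic g c) :
    Function.Periodic (deriv g) c := fun x => by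
  rw [← deriv_comp_add_const, funext hg]

section PartialDerivatives

variable {f : ℝ × ℝ → ℝ}

theorem DifferentiableAt.hasDerivAt_partialT {t x : ℝ} (hf : DifferentiableAt ℝ f (t, x)) :
    HasDerivAt (fun s => f (s, x)) (partialT f (t, x)) t :=
  (hf.comp t (differentiableAt_id.prodMk (differentiableAt_const x))).hasDerivAt

theorem DifferentiableAt.hasDerivAt_partialX {t x : ℝ} (hf : DifferentiableAt ℝ f (t, x)) :
    HasDerivAt (fun y => f (t, y)) (partialX f (t, x)) x :=
  (hf.comp x ((differentiableAt_const t).prodMk differentiableAt_id)).hasDerivAt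

theorem partialT_eq_fderiv {z : ℝ × ℝ} (hf : DifferentiableAt ℝ f z) :
    partialT f z = fderiv ℝ f z (1, 0) :=
  hf.hasDerivAt_partialT.unique
    (hf.hasFDerivAt.comp_hasDerivAt z.1 ((hasDerivAt_id z.1).prodMk (hasDerivAt_const z.1 z.2)))

theorem partialX_eq_fderiv {z : ℝ × ℝ} (hf : DifferentiableAt ℝ f z) :
    partialX f z = fderiv ℝ f z (0, 1) :=
  hf.hasDerivAt_partialX.unique
    (hf.hasFDerivAt.comp_hasDerivAt z.2 ((hasDerivAt_const z.2 z.1).prodMk (hasDerivAt_id z.2)))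

theorem ContDiff.fderiv_apply_const {n m : WithTop ℕ∞} (hf : ContDiff ℝ n f) (hmn : m + 1 ≤ n)
    (v : ℝ × ℝ) : ContDiff ℝ m (fun z => fderiv ℝ f z v) :=
  (hf.fderiv_right hmn).clm_apply contDiff_const

theorem ContDiff.partialT {n m : WithTop ℕ∞} (hf : ContDiff ℝ n f) (hmn : m + 1 ≤ n) :
    ContDiff ℝ m (partialT f) := by
  have hdiff := (hf.of_le hmn).differentiable (by simp)
  simpa only [funext fun z => partialT_eq_fderiv (hdiff z)] using hf.fderiv_apply_const hmn (1, 0)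

theorem ContDiff.partialX {n m : WithTop ℕ∞} (hf : ContDiff ℝ n f) (hmn : m + 1 ≤ n) :
    ContDiff ℝ m (partialX f) := by
  have hdiff := (hf.of_le hmn).differentiable (by simp)
  simpa only [funext fun z => partialX_eq_fderiv (hdiff z)] using hf.fderiv_apply_const hmn (0, 1)

theorem partialT_partialX (hf : ContDiff ℝ 2 f) (z : ℝ × ℝ) :
    partialT (partialX f) z = partialX (partialT f) z := by
  have hdiff := hf.differentiable (by simp)
  have hdf : Differentiable ℝ (fderiv ℝ f) :=
    (hf.fderiv_right le_rfl).differentiable one_ne_zero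
  have hfderiv_apply (v w : ℝ × ℝ) :
      fderiv ℝ (fun y => fderiv ℝ f y v) z w = fderiv ℝ (fderiv ℝ f) z w v := by
    rw [fderiv_clm_apply (hdf z) (differentiableAt_const v)]
    simp
  have hX : partialX f = fun y => fderiv ℝ f y (0, 1) :=
    funext fun y => partialX_eq_fderiv (hdiff y)
  have hT : partialT f = fun y => fderiv ℝ f y (1, 0) :=
    funext fun y => partialT_eq_fderiv (hdiff y)
  rw [partialT_eq_fderiv ((hf.partialX (m := 1) le_rfl).differentiable one_ne_zero z),
    partialX_eq_fderiv ((hf.partialT (m := 1) le_rfl).differentiable one_ne_zero z),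
    hX, hT, hfderiv_apply, hfderiv_apply]
  exact hf.contDiffAt.isSymmSndFDerivAt (by simp) _ _

theorem partialT_comp {g : ℝ → ℝ} {z : ℝ × ℝ} (hg : DifferentiableAt ℝ g (f z))
    (hf : DifferentiableAt ℝ f z) : partialT (g ∘ f) z = deriv g (f z) * partialT f z :=
  (hg.hasDerivAt.comp z.1 hf.hasDerivAt_partialT).deriv

theorem hasDerivAt_setIntegral_Ico (hf : ContDiff ℝ 1 f) (a b t : ℝ) :
    HasDerivAt (fun s => ∫ x in Set.Ico a b, f (s, x))
      (∫ x in Set.Ico a b, partialT f (t, x)) t := by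
  have hfc : Continuous f := hf.continuous
  have hft : Continuous (partialT f) := (hf.partialT (m := 0) le_rfl).continuous
  obtain ⟨C, hC⟩ := ((isCompact_Icc (a := t - 1) (b := t + 1)).prod
    (isCompact_Icc (a := a) (b := b))).exists_bound_of_continuousOn hft.continuousOn
  have hslice {g : ℝ × ℝ → ℝ} (hg : Continuous g) (s : ℝ) :
      IntegrableOn (fun x => g (s, x)) (Set.Ico a b) :=
    ((hg.comp (Continuous.prodMk_right s)).integrableOn_Icc).mono_set Set.Ico_subset_Icc_self
  refine (hasDerivAt_integral_of_dominated_loc_of_deriv_le (bound := fun _ => C)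
    (Metric.ball_mem_nhds t one_pos) (.of_forall fun s => (hslice hfc s).aestronglyMeasurable)
    (hslice hfc t) (hslice hft t).aestronglyMeasurable ?_ (integrableOn_const (by simp) (by simp))
    (.of_forall fun x s _ => ((hf.differentiable one_ne_zero) (s, x)).hasDerivAt_partialT)).2
  filter_upwards [ae_restrict_mem measurableSet_Ico] with x hx s hs
  rw [Metric.mem_ball, Real.dist_eq, abs_lt] at hs
  exact hC (s, x) ⟨⟨by linarith, by linarith⟩, Set.Ico_subset_Icc_self hx⟩

end PartialDerivatives

theorem hasDerivAt_mul_arctan (p : ℝ) :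
    HasDerivAt (fun z => z * arctan z) (arctan p + p / (1 + p ^ 2)) p := by
  have : HasDerivAt (fun z => z * arctan z) _ p := (hasDerivAt_id' p).mul (hasDerivAt_arctan p)
  exact this.congr_deriv (by ring)

theorem hasDerivAt_div_one_add_sq (p : ℝ) :
    HasDerivAt (fun z => z / (1 + z ^ 2)) ((1 - p ^ 2) / (1 + p ^ 2) ^ 2) p := by
  have : HasDerivAt (fun z => z / (1 + z ^ 2)) _ p :=
    (hasDerivAt_id' p).div ((hasDerivAt_const p 1).add (hasDerivAt_pow 2 p)) (by positivity)
  exact this.congr_deriv (by ring)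

theorem hasDerivAt_arctan_add_div (p : ℝ) :
    HasDerivAt (fun z => arctan z + z / (1 + z ^ 2)) (2 / (1 + p ^ 2) ^ 2) p := by
  have : HasDerivAt (fun z => arctan z + z / (1 + z ^ 2)) _ p :=
    (hasDerivAt_arctan p).add (hasDerivAt_div_one_add_sq p)
  exact this.congr_deriv (by field_simp; ring)

theorem hasDerivAt_arctan_sub_div (p : ℝ) :
    HasDerivAt (fun z => arctan z - z / (1 + z ^ 2)) (2 * p ^ 2 / (1 + p ^ 2) ^ 2) p := by
  have : HasDerivAt (fun z => arctan z - z / (1 + z ^ 2)) _ p :=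
    (hasDerivAt_arctan p).sub (hasDerivAt_div_one_add_sq p)
  exact this.congr_deriv (by field_simp; ring)

theorem hasDerivAt_setIntegral_Ico_mul_arctan {P : ℝ × ℝ → ℝ} (hP : ContDiff ℝ 1 P)
    (a b t : ℝ) :
    HasDerivAt (fun s => ∫ x in Set.Ico a b, P (s, x) * arctan (P (s, x)))
      (∫ x in Set.Ico a b,
        (arctan (P (t, x)) + P (t, x) / (1 + P (t, x) ^ 2)) * partialT P (t, x)) t := by
  refine (hasDerivAt_setIntegral_Ico (f := (fun p => p * arctan p) ∘ P)
    ((contDiff_id.mul contDiff_arctan).comp hP) a b t).congr_deriv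
    (integral_congr_ae (.of_forall fun x => ?_))
  exact (partialT_comp (hasDerivAt_mul_arctan _).differentiableAt
    (hP.differentiable one_ne_zero _)).trans (by rw [(hasDerivAt_mul_arctan _).deriv])

theorem setIntegral_Ico_arctan_add_dissipation_eq_zero {u p q r s : ℝ → ℝ} {a b : ℝ}
    (hab : a ≤ b) (hu : ∀ x, HasDerivAt u (p x) x) (hp : ∀ x, HasDerivAt p (q x) x)
    (hr : ∀ x, HasDerivAt (fun y => u y * p y) (r x) x) (hs : ∀ x, HasDerivAt r (s x) x)
    (hq : Continuous q) (hsc : Continuous s) (hpab : p a = p b) (hrab : r a = r b) :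
    (∫ x in Set.Ico a b, (arctan (p x) + p x / (1 + p x ^ 2)) * s x)
      + ∫ x in Set.Ico a b, 2 * u x * q x ^ 2 / (1 + p x ^ 2) ^ 2 = 0 := by
  have huc : Continuous u := continuous_iff_continuousAt.2 fun x => (hu x).continuousAt
  have hpc : Continuous p := continuous_iff_continuousAt.2 fun x => (hp x).continuousAt
  have hne (x : ℝ) : 1 + p x ^ 2 ≠ 0 := by positivity
  have hflux_c : Continuous fun x => (arctan (p x) + p x / (1 + p x ^ 2)) * s x := by
    fun_prop (disch := exact hne)
  have hdiss_c : Continuous fun x => 2 * u x * q x ^ 2 / (1 + p x ^ 2) ^ 2 := by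
    fun_prop (disch := exact fun x => pow_ne_zero 2 (hne x))
  have hprimitive (x : ℝ) : HasDerivAt
      (fun y => (arctan (p y) + p y / (1 + p y ^ 2)) * r y - (arctan (p y) - p y / (1 + p y ^ 2)))
      ((arctan (p x) + p x / (1 + p x ^ 2)) * s x + 2 * u x * q x ^ 2 / (1 + p x ^ 2) ^ 2) x := by
    have hrx : r x = p x * p x + u x * q x := (hr x).unique ((hu x).mul (hp x))
    refine ((((hasDerivAt_arctan_add_div (p x)).comp x (hp x)).mul (hs x)).sub
      ((hasDerivAt_arctan_sub_div (p x)).comp x (hp x))).congr_deriv ?_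
    rw [hrx, Function.comp_apply]
    field_simp
    ring
  rw [← integral_add (hflux_c.integrableOn_Icc.mono_set Set.Ico_subset_Icc_self)
    (hdiss_c.integrableOn_Icc.mono_set Set.Ico_subset_Icc_self), integral_Ico_eq_integral_Ioo,
    ← integral_Ioc_eq_integral_Ioo, ← intervalIntegral.integral_of_le hab,
    intervalIntegral.integral_eq_sub_of_hasDerivAt (fun x _ => hprimitive x)
      ((hflux_c.add hdiss_c).intervalIntegrable a b), hpab, hrab, sub_self]

/-- For the one-dimensional Boussinesq equation `∂ₜh − ∂ₓ(h∂ₓh) = 0` on `𝕋 = ℝ/ℤ`,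
`(d/dt)∫(∂ₓh)arctan(∂ₓh) + ∫ 2h(∂ₓ²h)²/(1+(∂ₓh)²)² = 0`; in particular
`∫(∂ₓh)arctan(∂ₓh)` is nonincreasing (Proposition `prop:C2Boussinesq`). -/
theorem boussinesq_1d_arctan_decay
    (T : ℝ) (h : ℝ × ℝ → ℝ)
    (hsm : ContDiff ℝ (⊤ : ℕ∞) h)
    (hper : ∀ t x, h (t, x + 1) = h (t, x))
    (hpos : ∀ t x, 0 < h (t, x))
    (heq : ∀ t ∈ Set.Icc (0 : ℝ) T, ∀ x : ℝ,
      deriv (fun s => h (s, x)) t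
        - deriv (fun y => h (t, y) * deriv (fun z => h (t, z)) y) x = 0) :
    ∀ t ∈ Set.Icc (0 : ℝ) T,
      deriv (fun s => ∫ x in Set.Ico (0 : ℝ) 1,
            deriv (fun y => h (s, y)) x *
              Real.arctan (deriv (fun y => h (s, y)) x)) t
          + (∫ x in Set.Ico (0 : ℝ) 1,
              2 * h (t, x) * (deriv (fun y => deriv (fun z => h (t, z)) y) x) ^ 2
                / (1 + (deriv (fun z => h (t, z)) x) ^ 2) ^ 2) = 0
      ∧ deriv (fun s => ∫ x in Set.Ico (0 : ℝ) 1,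
            deriv (fun y => h (s, y)) x *
              Real.arctan (deriv (fun y => h (s, y)) x)) t ≤ 0 := by
  intro t ht
  have smooth_partialX {f : ℝ × ℝ → ℝ} (hf : ContDiff ℝ (⊤ : ℕ∞) f) :
      ContDiff ℝ (⊤ : ℕ∞) (partialX f) :=
    hf.partialX (by simp)
  have hasDerivAt_slice {f : ℝ × ℝ → ℝ} (hf : ContDiff ℝ (⊤ : ℕ∞) f) (x : ℝ) :
      HasDerivAt (fun y => f (t, y)) (partialX f (t, x)) x :=
    (hf.differentiable (by simp) _).hasDerivAt_partialX
  set W : ℝ × ℝ → ℝ := fun z => h z * partialX h z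
  have hP : ContDiff ℝ (⊤ : ℕ∞) (partialX h) := smooth_partialX hsm
  have hW : ContDiff ℝ (⊤ : ℕ∞) W := hsm.mul hP
  -- Schwarz, then the equation `∂ₜh = ∂ₓ(h ∂ₓh)` on the whole slice.
  have hdt_partialX (x : ℝ) : partialT (partialX h) (t, x) = partialX (partialX W) (t, x) := by
    rw [partialT_partialX (hsm.of_le (WithTop.coe_le_coe.2 le_top))]
    exact congrArg (deriv · x) (funext fun y => sub_eq_zero.mp (heq t ht y))
  have hh_per : Function.Periodic (fun x => h (t, x)) 1 := hper t
  have hP_per : Function.Periodic (fun x => partialX h (t, x)) 1 := hh_per.deriv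
  have hR_per : Function.Periodic (fun x => partialX W (t, x)) 1 := (hh_per.mul hP_per).deriv
  have hdissipation := setIntegral_Ico_arctan_add_dissipation_eq_zero zero_le_one
    (hasDerivAt_slice hsm) (hasDerivAt_slice hP) (hasDerivAt_slice hW)
    (hasDerivAt_slice (smooth_partialX hW))
    ((smooth_partialX hP).continuous.comp (.prodMk_right t))
    ((smooth_partialX (smooth_partialX hW)).continuous.comp (.prodMk_right t))
    (by simpa using (hP_per 0).symm) (by simpa using (hR_per 0).symm)
  have hnonneg : 0 ≤ ∫ x in Set.Ico (0 : ℝ) 1,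
      2 * h (t, x) * partialX (partialX h) (t, x) ^ 2 / (1 + partialX h (t, x) ^ 2) ^ 2 :=
    setIntegral_nonneg measurableSet_Ico fun x _ => by have := hpos t x; positivity
  simp only [← hdt_partialX] at hdissipation
  erw [(hasDerivAt_setIntegral_Ico_mul_arctan (hP.of_le (WithTop.coe_le_coe.2 le_top)) 0 1 t).deriv]
  exact ⟨hdissipation, by linarith⟩
end
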